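/- arXiv:1705.05755 — 4 statements merged into one kernel-verified Lean document; each statement's English description precedes it below -/
import Mathlib

section
/- Let (M, d) be a metric space, k ≥ 1, and let r_1, …, r_t ∈ M be requests. For every configuration sequence B_0, B_1, …, B_t there exists a configuration sequence A_0, A_1, …, A_t that is valid for r_1, …, r_t (i.e., A_i serves r_i for each 1 ≤ i ≤ t) with A_0 = B_0 and movement cost ∑_{i=1}^t D(A_{i-1}, A_i) at most the relaxed cost ∑_{i=1}^t D(B_{i-1}, B_i) + 2 ∑_{i=1}^t s(B_i, r_i). -/
/-- The matching distance between two configurations of `k` servers. -/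
noncomputable def matchDist {M : Type*} [MetricSpace M] {k : ℕ} (A B : Fin k → M) : ℝ :=
  ⨅ σ : Equiv.Perm (Fin k), ∑ j, dist (A j) (B (σ j))

/-- The serving distance from a configuration to a request point. -/
noncomputable def servDist {M : Type*} [MetricSpace M] {k : ℕ} (A : Fin k → M) (r : M) : ℝ :=
  ⨅ j : Fin k, dist (A j) r

section aux

variable {M : Type*} [MetricSpace M] {k : ℕ}

lemma matchDist_le (A B : Fin k → M) (σ : Equiv.Perm (Fin k)) :
    matchDist A B ≤ ∑ j, dist (A j) (B (σ j)) := by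
  refine ciInf_le ⟨0, ?_⟩ σ
  rintro x ⟨σ, rfl⟩
  exact Finset.sum_nonneg fun _ _ => dist_nonneg

lemma matchDist_nonneg (A B : Fin k → M) : 0 ≤ matchDist A B := by
  refine Real.iInf_nonneg fun σ => Finset.sum_nonneg fun _ _ => dist_nonneg

lemma matchDist_exists (A B : Fin k → M) :
    ∃ σ : Equiv.Perm (Fin k), matchDist A B = ∑ j, dist (A j) (B (σ j)) := by
  obtain ⟨σ, hσ⟩ := Finite.exists_min (fun σ : Equiv.Perm (Fin k) => ∑ j, dist (A j) (B (σ j)))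
  exact ⟨σ, le_antisymm (matchDist_le A B σ) (le_ciInf hσ)⟩

lemma matchDist_comm (A B : Fin k → M) : matchDist A B = matchDist B A := by
  have key : ∀ C D : Fin k → M, matchDist C D ≤ matchDist D C := by
    intro C D
    obtain ⟨σ, hσ⟩ := matchDist_exists D C
    rw [hσ]
    calc matchDist C D ≤ ∑ j, dist (C j) (D (σ.symm j)) := matchDist_le C D σ.symm
      _ = ∑ j, dist (C (σ j)) (D (σ.symm (σ j))) :=
          (Equiv.sum_comp σ (fun j => dist (C j) (D (σ.symm j)))).symm
      _ = ∑ j, dist (D j) (C (σ j)) := by simp [dist_comm]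
  exact le_antisymm (key A B) (key B A)

lemma matchDist_triangle (A B C : Fin k → M) :
    matchDist A C ≤ matchDist A B + matchDist B C := by
  obtain ⟨σ, hσ⟩ := matchDist_exists A B
  obtain ⟨τ, hτ⟩ := matchDist_exists B C
  rw [hσ, hτ]
  calc matchDist A C ≤ ∑ j, dist (A j) (C ((σ.trans τ) j)) := matchDist_le A C (σ.trans τ)
    _ ≤ ∑ j, (dist (A j) (B (σ j)) + dist (B (σ j)) (C (τ (σ j)))) := by
        refine Finset.sum_le_sum fun j _ => ?_
        exact dist_triangle _ _ _
    _ = ∑ j, dist (A j) (B (σ j)) + ∑ j, dist (B (σ j)) (C (τ (σ j))) :=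
        Finset.sum_add_distrib
    _ = ∑ j, dist (A j) (B (σ j)) + ∑ j, dist (B j) (C (τ j)) := by
        rw [Equiv.sum_comp σ (fun j => dist (B j) (C (τ j)))]

lemma matchDist_self (A : Fin k → M) : matchDist A A = 0 := by
  refine le_antisymm ?_ (matchDist_nonneg A A)
  have := matchDist_le A A 1
  simpa using this

lemma matchDist_update (B : Fin k → M) (j : Fin k) (x : M) :
    matchDist (Function.update B j x) B ≤ dist x (B j) := by
  have h := matchDist_le (Function.update B j x) B 1
  have hsum : ∑ i, dist (Function.update B j x i) (B ((1 : Equiv.Perm (Fin k)) i))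
      = dist x (B j) := by
    rw [Finset.sum_eq_single j]
    · simp
    · intro i _ hij
      simp [Function.update_of_ne hij]
    · simp
  rwa [hsum] at h

lemma servDist_exists (hk : 1 ≤ k) (B : Fin k → M) (r : M) :
    ∃ j : Fin k, servDist B r = dist (B j) r := by
  haveI : Nonempty (Fin k) := ⟨⟨0, hk⟩⟩
  obtain ⟨j, hj⟩ := Finite.exists_min (fun j : Fin k => dist (B j) r)
  exact ⟨j, le_antisymm (ciInf_le ⟨0, by rintro x ⟨i, rfl⟩; exact dist_nonneg⟩ j) (le_ciInf hj)⟩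

end aux

/-- for every configuration sequence `B_0, …, B_t` there exists a
valid configuration sequence `A_0, …, A_t` (i.e. `A i` serves `r i`) with
`A 0 = B 0` whose movement cost is at most the relaxed cost of `B`. -/
theorem exists_valid_le_relaxedCost {M : Type*} [MetricSpace M] {k t : ℕ} (hk : 1 ≤ k)
    (r : Fin t → M) (B : Fin (t + 1) → Fin k → M) :
    ∃ A : Fin (t + 1) → Fin k → M,
      A 0 = B 0 ∧
      (∀ i : Fin t, ∃ j, r i = A i.succ j) ∧
      ∑ i : Fin t, matchDist (A i.castSucc) (A i.succ) ≤
        ∑ i : Fin t, matchDist (B i.castSucc) (B i.succ) +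
          2 * ∑ i : Fin t, servDist (B i.succ) (r i) := by
  choose j hj using fun i : Fin t => servDist_exists hk (B i.succ) (r i)
  set A : Fin (t + 1) → Fin k → M :=
    fun m => Fin.cases (B 0) (fun i => Function.update (B i.succ) (j i) (r i)) m with hA
  have hA0 : A 0 = B 0 := by simp [hA]
  have hAsucc : ∀ i : Fin t, A i.succ = Function.update (B i.succ) (j i) (r i) := by
    intro i; simp [hA]
  refine ⟨A, hA0, ?_, ?_⟩
  · intro i
    exact ⟨j i, by rw [hAsucc i]; simp⟩
  · set g : Fin (t + 1) → ℝ := fun m => matchDist (A m) (B m) with hg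
    have hg0 : g 0 = 0 := by rw [hg]; simp only [hA0]; exact matchDist_self (B 0)
    have hgnn : ∀ m, 0 ≤ g m := fun m => matchDist_nonneg _ _
    have hgsucc : ∀ i : Fin t, g i.succ ≤ servDist (B i.succ) (r i) := by
      intro i
      rw [hj i, hg]
      simp only [hAsucc i]
      calc matchDist (Function.update (B i.succ) (j i) (r i)) (B i.succ)
          ≤ dist (r i) (B i.succ (j i)) := matchDist_update _ _ _
        _ = dist (B i.succ (j i)) (r i) := dist_comm _ _
    have key : ∀ i : Fin t, matchDist (A i.castSucc) (A i.succ) ≤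
        g i.castSucc + matchDist (B i.castSucc) (B i.succ) + g i.succ := by
      intro i
      calc matchDist (A i.castSucc) (A i.succ)
          ≤ matchDist (A i.castSucc) (B i.castSucc) + matchDist (B i.castSucc) (A i.succ) :=
            matchDist_triangle _ _ _
        _ ≤ matchDist (A i.castSucc) (B i.castSucc) +
            (matchDist (B i.castSucc) (B i.succ) + matchDist (B i.succ) (A i.succ)) := by
            have := matchDist_triangle (B i.castSucc) (B i.succ) (A i.succ)
            linarith
        _ = g i.castSucc + matchDist (B i.castSucc) (B i.succ) + g i.succ := by
            rw [hg]; rw [matchDist_comm (B i.succ) (A i.succ)]; ring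
    have hcast_le : ∑ i : Fin t, g i.castSucc ≤ ∑ i : Fin t, g i.succ := by
      have h1 : ∑ m : Fin (t + 1), g m = ∑ i : Fin t, g i.castSucc + g (Fin.last t) :=
        Fin.sum_univ_castSucc g
      have h2 : ∑ m : Fin (t + 1), g m = g 0 + ∑ i : Fin t, g i.succ :=
        Fin.sum_univ_succ g
      have := hgnn (Fin.last t)
      rw [hg0] at h2
      linarith [h1, h2]
    have hsum : ∑ i : Fin t, g i.succ ≤ ∑ i : Fin t, servDist (B i.succ) (r i) :=
      Finset.sum_le_sum fun i _ => hgsucc i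
    calc ∑ i : Fin t, matchDist (A i.castSucc) (A i.succ)
        ≤ ∑ i : Fin t, (g i.castSucc + matchDist (B i.castSucc) (B i.succ) + g i.succ) :=
          Finset.sum_le_sum fun i _ => key i
      _ = ∑ i : Fin t, g i.castSucc + ∑ i : Fin t, matchDist (B i.castSucc) (B i.succ) +
          ∑ i : Fin t, g i.succ := by rw [Finset.sum_add_distrib, Finset.sum_add_distrib]
      _ ≤ ∑ i : Fin t, matchDist (B i.castSucc) (B i.succ) +
          2 * ∑ i : Fin t, servDist (B i.succ) (r i) := by
          have h1 := hcast_le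
          have h2 := hsum
          linarith
end

section
/- Let (M, d) be a finite metric space, k ≥ 1, and let P_1, …, P_t be probability mass functions on M. There exists a sequence of configurations B_0, B_1, …, B_t whose expected relaxed cost is within a factor 3 of the optimal online cost: ∑_{i=1}^t D(B_{i-1}, B_i) + 2 ∑_{i=1}^t ∑_{r ∈ M} P_i(r) · s(B_i, r) ≤ 3 · OPT. -/
/-- The dynamic-programming value function for the stochastic `k`-server problem:
`dpVal [P_i, …, P_t] B = V_i(B)`, where `V_{t+1}(B) = 0` and
`V_i(B) = ∑_r P_i(r) · min over configurations A serving r of (D(B, A) + V_{i+1}(A))`. -/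
noncomputable def dpVal {M : Type*} [MetricSpace M] [Fintype M] {k : ℕ} :
    List (M → ℝ) → (Fin k → M) → ℝ
  | [], _ => 0
  | P :: Ps, B => ∑ r : M, P r *
      sInf {c | ∃ A : Fin k → M, (∃ j, r = A j) ∧ c = matchDist B A + dpVal Ps A}

section aux

variable {M : Type*} [MetricSpace M] {k : ℕ}

lemma servDist_le_matchDist {C A : Fin k → M} {r : M} (h : ∃ j, r = A j) :
    servDist C r ≤ matchDist C A := by
  obtain ⟨j₀, hj₀⟩ := h
  refine le_ciInf fun σ => ?_
  have h1 : servDist C r ≤ dist (C (σ.symm j₀)) r := by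
    apply ciInf_le
    exact ⟨0, by rintro x ⟨j, rfl⟩; exact dist_nonneg⟩
  have h2 : dist (C (σ.symm j₀)) r ≤ ∑ j, dist (C j) (A (σ j)) := by
    have : dist (C (σ.symm j₀)) r = dist (C (σ.symm j₀)) (A (σ (σ.symm j₀))) := by
      rw [σ.apply_symm_apply, ← hj₀]
    rw [this]
    exact Finset.single_le_sum (f := fun j => dist (C j) (A (σ j)))
      (fun i _ => dist_nonneg) (Finset.mem_univ (σ.symm j₀))
  exact h1.trans h2

end aux

section dpaux

variable {M : Type*} [MetricSpace M] [Fintype M] {k : ℕ}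

lemma dp_sInf_mem (hk : 1 ≤ k) (Ps : List (M → ℝ)) (B : Fin k → M) (r : M) :
    ∃ A : Fin k → M, (∃ j, r = A j) ∧
      sInf {c | ∃ A : Fin k → M, (∃ j, r = A j) ∧ c = matchDist B A + dpVal Ps A}
        = matchDist B A + dpVal Ps A := by
  set S := {c | ∃ A : Fin k → M, (∃ j, r = A j) ∧ c = matchDist B A + dpVal Ps A} with hS
  have hne : S.Nonempty := by
    refine ⟨matchDist B (fun _ => r) + dpVal Ps (fun _ => r), ⟨fun _ => r, ⟨⟨0, hk⟩, rfl⟩, rfl⟩⟩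
  have hfin : S.Finite := by
    apply Set.Finite.subset (Set.finite_range fun A : Fin k → M => matchDist B A + dpVal Ps A)
    rintro x ⟨A, _, rfl⟩
    exact ⟨A, rfl⟩
  obtain ⟨A, hA, hval⟩ := hne.csInf_mem hfin
  exact ⟨A, hA, hval⟩

/-- exists an index whose value is at most the weighted average. -/
lemma exists_le_avg {Q : M → ℝ} (h0 : ∀ r, 0 ≤ Q r) (h1 : ∑ r : M, Q r = 1)
    (g : M → ℝ) : ∃ r, g r ≤ ∑ s : M, Q s * g s := by
  by_contra hcon
  push_neg at hcon
  have hex : ∃ a ∈ Finset.univ, Q a ≠ 0 := by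
    apply Finset.exists_ne_zero_of_sum_ne_zero
    rw [h1]; norm_num
  obtain ⟨a, _, ha⟩ := hex
  have hQa : 0 < Q a := lt_of_le_of_ne (h0 a) (Ne.symm ha)
  set c := ∑ s : M, Q s * g s with hc
  have hlt : ∑ s : M, Q s * c < ∑ s : M, Q s * g s := by
    apply Finset.sum_lt_sum
    · intro i _
      rcases eq_or_lt_of_le (h0 i) with h | h
      · rw [← h]; simp
      · exact mul_le_mul_of_nonneg_left (le_of_lt (hcon i)) (le_of_lt h)
    · exact ⟨a, Finset.mem_univ a, mul_lt_mul_of_pos_left (hcon a) hQa⟩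
  have : ∑ s : M, Q s * c = c := by
    rw [← Finset.sum_mul, h1, one_mul]
  rw [this] at hlt
  exact lt_irrefl _ hlt

/-- Main inductive lemma: from any starting configuration `C`, there is a sequence `T`
starting at `C` whose "shifted" relaxed cost (serving each distribution from the
configuration *before* the step-`i` move) is at most `3 · dpVal`. -/
lemma main_induction (hk : 1 ≤ k) :
    ∀ (n : ℕ) (Q : Fin n → M → ℝ), (∀ i r, 0 ≤ Q i r) → (∀ i, ∑ r : M, Q i r = 1) →
    ∀ C : Fin k → M, ∃ T : Fin (n + 1) → Fin k → M, T 0 = C ∧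
      ∑ i : Fin n, matchDist (T i.castSucc) (T i.succ) +
        2 * ∑ i : Fin n, ∑ r : M, Q i r * servDist (T i.castSucc) r ≤
      3 * dpVal (List.ofFn Q) C := by
  intro n
  induction n with
  | zero =>
      intro Q _ _ C
      refine ⟨fun _ => C, rfl, ?_⟩
      simp [dpVal]
  | succ n ih =>
      intro Q hQ0 hQ1 C
      -- unfold dpVal on (Q 0 :: rest)
      set Ps' := List.ofFn (fun i : Fin n => Q i.succ) with hPs'
      -- minimizers A r for each request r
      have hmin : ∀ r : M, ∃ A : Fin k → M, (∃ j, r = A j) ∧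
          sInf {c | ∃ A : Fin k → M, (∃ j, r = A j) ∧ c = matchDist C A + dpVal Ps' A}
            = matchDist C A + dpVal Ps' A := fun r => dp_sInf_mem hk Ps' C r
      choose A hA hAval using hmin
      -- pick r̂ with value below average
      obtain ⟨r₀, hr₀⟩ := exists_le_avg (hQ0 0) (hQ1 0)
        (fun r => matchDist C (A r) + 3 * dpVal Ps' (A r))
      -- apply IH from A r₀
      obtain ⟨T', hT'0, hT'⟩ := ih (fun i => Q i.succ) (fun i r => hQ0 i.succ r)
        (fun i => hQ1 i.succ) (A r₀)
      refine ⟨Fin.cons C T', Fin.cons_zero _ _, ?_⟩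
      -- rewrite the sums via Fin.sum_univ_succ
      have hmov : ∑ i : Fin (n + 1),
          matchDist ((Fin.cons C T' : Fin (n + 2) → Fin k → M) i.castSucc)
            ((Fin.cons C T' : Fin (n + 2) → Fin k → M) i.succ)
          = matchDist C (A r₀) +
            ∑ i : Fin n, matchDist (T' i.castSucc) (T' i.succ) := by
        rw [Fin.sum_univ_succ]
        have etail : ∀ j : Fin n,
            matchDist ((Fin.cons C T' : Fin (n + 2) → Fin k → M) (j.succ).castSucc)
              ((Fin.cons C T' : Fin (n + 2) → Fin k → M) (j.succ).succ)
            = matchDist (T' j.castSucc) (T' j.succ) := by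
          intro j
          rw [← Fin.succ_castSucc]
          simp [Fin.cons_succ]
        rw [Finset.sum_congr rfl fun j _ => etail j]
        congr 1
        simp [hT'0]
      have hserv : ∑ i : Fin (n + 1), ∑ r : M, Q i r *
          servDist ((Fin.cons C T' : Fin (n + 2) → Fin k → M) i.castSucc) r
          = (∑ r : M, Q 0 r * servDist C r) +
            ∑ i : Fin n, ∑ r : M, Q i.succ r * servDist (T' i.castSucc) r := by
        rw [Fin.sum_univ_succ]
        have etail : ∀ j : Fin n,
            (∑ r : M, Q j.succ r *
              servDist ((Fin.cons C T' : Fin (n + 2) → Fin k → M) (j.succ).castSucc) r)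
            = ∑ r : M, Q j.succ r * servDist (T' j.castSucc) r := by
          intro j
          rw [← Fin.succ_castSucc]
          simp [Fin.cons_succ]
        rw [Finset.sum_congr rfl fun j _ => etail j]
        congr 1
      rw [hmov, hserv]
      -- dpVal of the full list
      have hdp : dpVal (List.ofFn Q) C = ∑ r : M, Q 0 r * (matchDist C (A r) + dpVal Ps' (A r)) := by
        rw [List.ofFn_succ]
        show (∑ r : M, Q 0 r * sInf _) = _
        exact Finset.sum_congr rfl fun r _ => by rw [hAval r]
      rw [hdp]
      -- serving at C is at most expected matching distance
      have hservC : ∑ r : M, Q 0 r * servDist C r ≤ ∑ r : M, Q 0 r * matchDist C (A r) :=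
        Finset.sum_le_sum fun r _ =>
          mul_le_mul_of_nonneg_left (servDist_le_matchDist (hA r)) (hQ0 0 r)
      -- algebra
      have halg : (∑ s : M, Q 0 s * (matchDist C (A s) + 3 * dpVal Ps' (A s))) +
          2 * (∑ r : M, Q 0 r * matchDist C (A r)) =
          3 * ∑ r : M, Q 0 r * (matchDist C (A r) + dpVal Ps' (A r)) := by
        rw [Finset.mul_sum, Finset.mul_sum, ← Finset.sum_add_distrib]
        exact Finset.sum_congr rfl fun r _ => by ring
      linarith [hT', hr₀, hservC, halg]

end dpaux

/-- Shifting a sequence by one (staying in place at the first step) does not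
increase the total movement. -/
lemma shift_movement_le {M : Type*} [MetricSpace M] {k n : ℕ} (T : Fin (n + 1) → Fin k → M) :
    ∑ i : Fin n, matchDist ((Fin.cons (T 0) (fun j : Fin n => T j.castSucc) :
        Fin (n + 1) → Fin k → M) i.castSucc)
      ((Fin.cons (T 0) (fun j : Fin n => T j.castSucc) : Fin (n + 1) → Fin k → M) i.succ) ≤
    ∑ i : Fin n, matchDist (T i.castSucc) (T i.succ) := by
  cases n with
  | zero => simp
  | succ m =>
      set U : Fin (m + 2) → Fin k → M := Fin.cons (T 0) (fun j : Fin (m + 1) => T j.castSucc)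
        with hU
      rw [Fin.sum_univ_succ (f := fun i : Fin (m + 1) => matchDist (U i.castSucc) (U i.succ))]
      have h0 : matchDist (U (0 : Fin (m + 1)).castSucc) (U (0 : Fin (m + 1)).succ) = 0 := by
        have h1 : U (0 : Fin (m + 1)).castSucc = T 0 := by simp [hU]
        have h2 : U (0 : Fin (m + 1)).succ = T 0 := by
          show U (Fin.succ (0 : Fin (m + 1))) = T 0
          rw [hU, Fin.cons_succ]
          simp
        rw [h1, h2, matchDist_self]
      rw [h0, zero_add]
      have hterm : ∀ j : Fin m, matchDist (U (j.succ).castSucc) (U (j.succ).succ) =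
          matchDist (T (j.castSucc).castSucc) (T (j.castSucc).succ) := by
        intro j
        have e1 : U (j.succ).castSucc = T (j.castSucc).castSucc := by
          rw [← Fin.succ_castSucc, hU, Fin.cons_succ]
        have e2 : U (j.succ).succ = T (j.castSucc).succ := by
          show U (Fin.succ j.succ) = _
          rw [hU, Fin.cons_succ, Fin.succ_castSucc]
        rw [e1, e2]
      rw [Fin.sum_univ_castSucc (f := fun i : Fin (m + 1) => matchDist (T i.castSucc) (T i.succ))]
      have : ∑ j : Fin m, matchDist (U (j.succ).castSucc) (U (j.succ).succ) =
          ∑ j : Fin m, matchDist (T (j.castSucc).castSucc) (T (j.castSucc).succ) :=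
        Finset.sum_congr rfl fun j _ => hterm j
      rw [this]
      have := matchDist_nonneg (T (Fin.last m).castSucc) (T (Fin.last m).succ)
      linarith

/-- for a finite metric space and probability mass functions
`P_1, …, P_t`, there exists a sequence of configurations `B_0, …, B_t` whose
expected relaxed cost is within a factor 3 of the optimal online cost
`OPT = min_B V_1(B)`. -/
theorem exists_configSeq_relaxedCost_le_three_mul_OPT
    {M : Type*} [MetricSpace M] [Fintype M] [Nonempty M] {k t : ℕ} (hk : 1 ≤ k)
    (P : Fin t → M → ℝ) (hP0 : ∀ i r, 0 ≤ P i r) (hP1 : ∀ i, ∑ r : M, P i r = 1) :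
    ∃ B : Fin (t + 1) → Fin k → M,
      ∑ i : Fin t, matchDist (B i.castSucc) (B i.succ) +
          2 * ∑ i : Fin t, ∑ r : M, P i r * servDist (B i.succ) r ≤
        3 * ⨅ B0 : Fin k → M, dpVal (List.ofFn P) B0 := by
  -- optimal starting configuration
  obtain ⟨C, hC⟩ := Finite.exists_min (fun B : Fin k → M => dpVal (List.ofFn P) B)
  have hCinf : dpVal (List.ofFn P) C ≤ ⨅ B0 : Fin k → M, dpVal (List.ofFn P) B0 :=
    le_ciInf hC
  obtain ⟨T, hT0, hTcost⟩ := main_induction hk t P hP0 hP1 C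
  refine ⟨Fin.cons (T 0) (fun j : Fin t => T j.castSucc), ?_⟩
  have hserv : ∀ i : Fin t,
      (Fin.cons (T 0) (fun j : Fin t => T j.castSucc) : Fin (t + 1) → Fin k → M) i.succ
        = T i.castSucc := fun i => Fin.cons_succ _ _ i
  have hserveq : ∑ i : Fin t, ∑ r : M, P i r *
      servDist ((Fin.cons (T 0) (fun j : Fin t => T j.castSucc) :
        Fin (t + 1) → Fin k → M) i.succ) r
      = ∑ i : Fin t, ∑ r : M, P i r * servDist (T i.castSucc) r := by
    refine Finset.sum_congr rfl fun i _ => ?_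
    rw [hserv i]
  rw [hserveq]
  have hmov := shift_movement_le T
  have h3 : (3 : ℝ) * dpVal (List.ofFn P) C ≤
      3 * ⨅ B0 : Fin k → M, dpVal (List.ofFn P) B0 := by linarith
  linarith
end

section
/- Let k ≥ 1 and let μ be a fractional configuration of mass k on the line. If x₀ ∈ ℝ satisfies μ(x₀) ≥ 1, then for every ω ∈ (0, 1] there exists j < k with f_μ(ω + j) = x₀; that is, the rounded configuration I_ω(μ) contains a server at x₀. -/
/-- The cumulative mass function `F_μ(x) = ∑_{y ≤ x} μ(y)` of a finitely
supported mass function `μ` on the line. -/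
noncomputable def cumMass (μ : ℝ →₀ ℝ) (x : ℝ) : ℝ :=
  ∑ y ∈ μ.support.filter (fun y => y ≤ x), μ y

/-- The quantile function `f_μ(y)`: the least point of the support of `μ` whose
cumulative mass is at least `y`. -/
noncomputable def quantile (μ : ℝ →₀ ℝ) (y : ℝ) : ℝ :=
  sInf {x | x ∈ μ.support ∧ y ≤ cumMass μ x}

/-- if a fractional configuration `μ` of mass `k` has mass at least
`1` at `x₀`, then for every `ω ∈ (0, 1]` the rounded configuration
`I_ω(μ) = (f_μ(ω + j))_{j < k}` contains a server at `x₀`. -/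
theorem rounded_contains_heavy_point {k : ℕ} (hk : 1 ≤ k) (μ : ℝ →₀ ℝ)
    (hμ0 : ∀ x, 0 ≤ μ x) (hμk : ∑ x ∈ μ.support, μ x = k)
    (x₀ : ℝ) (hx₀ : 1 ≤ μ x₀) :
    ∀ ω ∈ Set.Ioc (0 : ℝ) 1, ∃ j : Fin k, quantile μ (ω + (j : ℕ)) = x₀ := by
  intro ω hω
  obtain ⟨hω0, hω1⟩ := hω
  have hx₀supp : x₀ ∈ μ.support := by
    simp only [Finsupp.mem_support_iff]
    intro h; rw [h] at hx₀; linarith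
  set A : ℝ := cumMass μ x₀ - μ x₀ with hA
  have hmem : x₀ ∈ μ.support.filter (fun y => y ≤ x₀) := by
    simp [hx₀supp]
  have hAerase : A = ∑ y ∈ (μ.support.filter (fun y => y ≤ x₀)).erase x₀, μ y := by
    rw [hA, cumMass, ← Finset.add_sum_erase _ _ hmem]; ring
  have hA0 : 0 ≤ A := by
    rw [hAerase]
    exact Finset.sum_nonneg fun i _ => hμ0 i
  have hbelow : ∀ x ∈ μ.support, x < x₀ → cumMass μ x ≤ A := by
    intro x hx hxlt
    rw [hAerase, cumMass]
    apply Finset.sum_le_sum_of_subset_of_nonneg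
    · intro y hy
      simp only [Finset.mem_filter, Finset.mem_erase] at hy ⊢
      exact ⟨ne_of_lt (lt_of_le_of_lt hy.2 hxlt), hy.1, le_of_lt (lt_of_le_of_lt hy.2 hxlt)⟩
    · intro i _ _; exact hμ0 i
  have hFk : cumMass μ x₀ ≤ (k : ℝ) := by
    rw [← hμk, cumMass]
    apply Finset.sum_le_sum_of_subset_of_nonneg (Finset.filter_subset _ _)
    intro i _ _; exact hμ0 i
  have hAF : A + 1 ≤ cumMass μ x₀ := by rw [hA]; linarith
  have hAk : A + 1 ≤ (k : ℝ) := le_trans hAF hFk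
  -- choose j := (⌊A - ω⌋ + 1).toNat
  have hfl : (0 : ℤ) ≤ ⌊A - ω⌋ + 1 := by
    have h1 : (-1 : ℤ) ≤ ⌊A - ω⌋ := by
      rw [Int.le_floor]; push_cast; linarith
    linarith
  set jz : ℤ := ⌊A - ω⌋ + 1 with hjz
  set j : ℕ := jz.toNat with hj
  have hjcast : (j : ℝ) = (jz : ℝ) := by
    rw [hj]; exact_mod_cast congrArg (Int.cast : ℤ → ℝ) (Int.toNat_of_nonneg hfl)
  have hylow : A < ω + j := by
    rw [hjcast, hjz]
    push_cast
    have := Int.lt_floor_add_one (A - ω)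
    linarith
  have hyhigh : ω + (j : ℝ) ≤ A + 1 := by
    rw [hjcast, hjz]
    push_cast
    have := Int.floor_le (A - ω)
    linarith
  have hjk : j < k := by
    have : (j : ℝ) < (k : ℝ) := by linarith
    exact_mod_cast this
  refine ⟨⟨j, hjk⟩, ?_⟩
  -- quantile at y = ω + j equals x₀
  have hyF : ω + (j : ℝ) ≤ cumMass μ x₀ := le_trans hyhigh hAF
  have hx₀S : x₀ ∈ {x | x ∈ μ.support ∧ ω + (j : ℝ) ≤ cumMass μ x} := ⟨hx₀supp, hyF⟩
  have hlb : ∀ x ∈ {x | x ∈ μ.support ∧ ω + (j : ℝ) ≤ cumMass μ x}, x₀ ≤ x := by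
    rintro x ⟨hxs, hxc⟩
    by_contra h
    push_neg at h
    have := hbelow x hxs h
    linarith
  show sInf {x | x ∈ μ.support ∧ ω + ((j : ℕ) : ℝ) ≤ cumMass μ x} = x₀
  apply le_antisymm
  · refine csInf_le ⟨x₀, hlb⟩ hx₀S
  · exact le_csInf ⟨x₀, hx₀S⟩ hlb
end

section
/- Let k ≥ 1 and let μ, ν be fractional configurations of mass k on the line. Then the integral over ω ∈ (0, 1] of the total coordinatewise displacement of the rounded configurations equals the L¹ distance of the cumulative mass functions: ∫_{(0,1]} ∑_{j=0}^{k−1} |f_μ(ω + j) − f_ν(ω + j)| dω = ∫_ℝ |F_μ(x) − F_ν(x)| dx. -/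
open MeasureTheory

/-!
Both sides are the area of the region `{(x, y) : 0 < y ≤ k, y lies between F_μ(x) and F_ν(x)}`.
The quantile function is a generalized inverse of the cumulative mass function,
`f_μ(y) ≤ x ↔ y ≤ F_μ(x)` for `y ∈ (0, k]`, so the horizontal slice at height `y` is the interval
between `f_μ(y)` and `f_ν(y)`, while the vertical slice at `x` is the interval between `F_μ(x)`
and `F_ν(x)`; Tonelli gives `∫_{(0,k]} |f_μ - f_ν| = ∫_ℝ |F_μ - F_ν|`. Cutting `(0, k]` into the
unit intervals `(j, j + 1]` turns the left-hand side into the integral over `ω ∈ (0, 1]`.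
-/

open Set

theorem setOf_not_le_iff_le_eq_uIoc {α : Type*} [LinearOrder α] (a b : α) :
    {y | ¬(y ≤ a ↔ y ≤ b)} = uIoc a b := by
  ext y; simp only [mem_ofPred_eq, mem_uIoc]; grind

theorem setOf_not_le_iff_le_eq_Ico {α : Type*} [LinearOrder α] (a b : α) :
    {x | ¬(a ≤ x ↔ b ≤ x)} = Ico (min a b) (max a b) := by
  ext x; simp only [mem_ofPred_eq, mem_Ico, min_le_iff, lt_max_iff]; grind

theorem integral_Ioc_sum_comp_add_natCast {E : Type*} [NormedAddCommGroup E] [NormedSpace ℝ E]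
    {g : ℝ → E} {k : ℕ} (hg : IntegrableOn g (Ioc 0 k)) :
    ∫ ω in Ioc (0 : ℝ) 1, ∑ j : Fin k, g (ω + (j : ℕ)) = ∫ y in Ioc (0 : ℝ) k, g y := by
  have hpiece : ∀ j < k, IntervalIntegrable g volume j (j + 1) := fun j hj =>
    (intervalIntegrable_iff_integrableOn_Ioc_of_le (by linarith)).2
      (hg.mono_set (Ioc_subset_Ioc (by positivity) (by exact_mod_cast hj)))
  have hsum (ω : ℝ) : ∑ j : Fin k, g (ω + (j : ℕ)) = ∑ j ∈ Finset.range k, g (ω + j) :=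
    Fin.sum_univ_eq_sum_range (fun j => g (ω + j)) k
  have hadj := intervalIntegral.sum_integral_adjacent_intervals (a := Nat.cast) (f := g) (n := k)
    fun j hj => by simpa using hpiece j hj
  rw [Nat.cast_zero] at hadj
  rw [← intervalIntegral.integral_of_le zero_le_one,
    ← intervalIntegral.integral_of_le (Nat.cast_nonneg k), funext hsum, ← hadj,
    intervalIntegral.integral_finsetSum fun j hj => by
      simpa using (hpiece j (Finset.mem_range.1 hj)).comp_add_right j]
  refine Finset.sum_congr rfl fun j _ => ?_
  rw [intervalIntegral.integral_comp_add_right, zero_add, add_comm, Nat.cast_succ]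

def IsQuantileOf (q F : ℝ → ℝ) (K : ℝ) : Prop :=
  ∀ y ∈ Ioc 0 K, ∀ x, q y ≤ x ↔ y ≤ F x

namespace IsQuantileOf

variable {q r F G : ℝ → ℝ} {K : ℝ}

theorem monotone_of_mem_Icc (hq : IsQuantileOf q F K) (hF : ∀ x, F x ∈ Icc 0 K) :
    Monotone F := by
  intro x x' hxx'
  rcases (hF x).1.eq_or_lt with hx | hx
  · exact hx ▸ (hF x').1
  · have hlevel : F x ∈ Ioc 0 K := ⟨hx, (hF x).2⟩
    exact (hq _ hlevel x').1 (((hq _ hlevel x).2 le_rfl).trans hxx')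

theorem monotoneOn (hq : IsQuantileOf q F K) : MonotoneOn q (Ioc 0 K) :=
  fun _ hy _ hy' hyy' => (hq _ hy _).2 (hyy'.trans ((hq _ hy' _).1 le_rfl))

theorem lintegral_abs_sub (hq : IsQuantileOf q F K) (hr : IsQuantileOf r G K)
    (hF : ∀ x, F x ∈ Icc 0 K) (hG : ∀ x, G x ∈ Icc 0 K) :
    ∫⁻ y in Ioc 0 K, ENNReal.ofReal |q y - r y| = ∫⁻ x, ENNReal.ofReal |F x - G x| := by
  set S : Set (ℝ × ℝ) := {p | p.2 ∈ Ioc 0 K ∧ ¬(p.2 ≤ F p.1 ↔ p.2 ≤ G p.1)}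
  have hS : MeasurableSet S := by
    have hFm := (hq.monotone_of_mem_Icc hF).measurable
    have hGm := (hr.monotone_of_mem_Icc hG).measurable
    refine (measurable_snd measurableSet_Ioc).inter (Measurable.setOf ?_)
    exact ((measurableSet_le measurable_snd (hFm.comp measurable_fst)).mem.iff
      (measurableSet_le measurable_snd (hGm.comp measurable_fst)).mem).not
  have hslice_x (x : ℝ) : Prod.mk x ⁻¹' S = uIoc (F x) (G x) := by
    have hsub : uIoc (F x) (G x) ⊆ Ioc 0 K :=
      Ioc_subset_Ioc (le_min (hF x).1 (hG x).1) (max_le (hF x).2 (hG x).2)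
    rw [← inter_eq_right.2 hsub, ← setOf_not_le_iff_le_eq_uIoc]
    rfl
  have hslice_y (y : ℝ) : (fun x => (x, y)) ⁻¹' S =
      if y ∈ Ioc 0 K then Ico (min (q y) (r y)) (max (q y) (r y)) else ∅ := by
    split_ifs with hy
    · rw [← setOf_not_le_iff_le_eq_Ico]
      ext x
      simp only [S, mem_preimage, mem_ofPred_eq, hy, true_and, hq y hy, hr y hy]
    · exact eq_empty_of_forall_notMem fun x hx => hy hx.1
  calc ∫⁻ y in Ioc 0 K, ENNReal.ofReal |q y - r y|
      = ∫⁻ y, volume ((fun x => (x, y)) ⁻¹' S) := by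
        rw [← lintegral_indicator measurableSet_Ioc]
        refine lintegral_congr fun y => ?_
        by_cases hy : y ∈ Ioc 0 K
        · simp [hslice_y, hy, Real.volume_Ico, max_sub_min_eq_abs, abs_sub_comm]
        · simp [hslice_y, hy]
    _ = volume S := by rw [Measure.volume_eq_prod, Measure.prod_apply_symm hS]
    _ = ∫⁻ x, ENNReal.ofReal |F x - G x| := by
        rw [Measure.volume_eq_prod, Measure.prod_apply hS]
        simp [hslice_x, Real.volume_uIoc, abs_sub_comm]

theorem integral_abs_sub (hq : IsQuantileOf q F K) (hr : IsQuantileOf r G K)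
    (hF : ∀ x, F x ∈ Icc 0 K) (hG : ∀ x, G x ∈ Icc 0 K) :
    ∫ y in Ioc 0 K, |q y - r y| = ∫ x, |F x - G x| := by
  have hqr : AEStronglyMeasurable (fun y => |q y - r y|) (volume.restrict (Ioc 0 K)) :=
    ((aemeasurable_restrict_of_monotoneOn measurableSet_Ioc hq.monotoneOn).sub
      (aemeasurable_restrict_of_monotoneOn measurableSet_Ioc hr.monotoneOn)).abs.aestronglyMeasurable
  have hFG : AEStronglyMeasurable (fun x => |F x - G x|) volume :=
    ((hq.monotone_of_mem_Icc hF).measurable.sub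
      (hr.monotone_of_mem_Icc hG).measurable).abs.aestronglyMeasurable
  rw [integral_eq_lintegral_of_nonneg_ae (ae_of_all _ fun _ => abs_nonneg _) hqr,
    integral_eq_lintegral_of_nonneg_ae (ae_of_all _ fun _ => abs_nonneg _) hFG,
    hq.lintegral_abs_sub hr hF hG]

end IsQuantileOf

section Quantile

variable {μ : ℝ →₀ ℝ} {x y : ℝ}

theorem cumMass_mono (hμ : ∀ x, 0 ≤ μ x) : Monotone (cumMass μ) :=
  fun _ _ hxx' => Finset.sum_le_sum_of_subset_of_nonneg
    (fun _ hz => by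
      rw [Finset.mem_filter] at hz ⊢
      exact ⟨hz.1, hz.2.trans hxx'⟩) fun z _ _ => hμ z

theorem cumMass_mem_Icc (hμ : ∀ x, 0 ≤ μ x) (x : ℝ) :
    cumMass μ x ∈ Icc 0 (∑ x ∈ μ.support, μ x) :=
  ⟨Finset.sum_nonneg fun z _ => hμ z,
    Finset.sum_le_sum_of_subset_of_nonneg (Finset.filter_subset _ _) fun z _ _ => hμ z⟩

theorem exists_cumMass_eq_sum (μ : ℝ →₀ ℝ) : ∃ M, cumMass μ M = ∑ x ∈ μ.support, μ x := by
  obtain ⟨M, hM⟩ := μ.support.bddAbove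
  exact ⟨M, by rw [cumMass, Finset.filter_true_of_mem fun z hz => hM hz]⟩

theorem exists_mem_support_le_cumMass (hy : 0 < y) (h : y ≤ cumMass μ x) :
    ∃ x' ∈ μ.support, x' ≤ x ∧ y ≤ cumMass μ x' := by
  have hne : (μ.support.filter (· ≤ x)).Nonempty :=
    Finset.nonempty_of_sum_ne_zero (hy.trans_le h).ne'
  obtain ⟨x', hx', hmax⟩ := Finset.exists_max_image _ id hne
  rw [Finset.mem_filter] at hx'
  refine ⟨x', hx'.1, hx'.2, h.trans_eq ?_⟩
  refine Finset.sum_congr (Finset.filter_congr fun z hz => ?_) fun _ _ => rfl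
  exact ⟨fun hzx => hmax z (Finset.mem_filter.2 ⟨hz, hzx⟩), fun hzx' => hzx'.trans hx'.2⟩

theorem quantile_mem (hy : 0 < y) (hyk : y ≤ ∑ x ∈ μ.support, μ x) :
    quantile μ y ∈ {x | x ∈ μ.support ∧ y ≤ cumMass μ x} := by
  obtain ⟨M, hM⟩ := exists_cumMass_eq_sum μ
  obtain ⟨x', hx', -, hyx'⟩ := exists_mem_support_le_cumMass hy (hyk.trans hM.ge)
  exact Set.Nonempty.csInf_mem ⟨x', hx', hyx'⟩ (μ.support.finite_toSet.subset fun _ h => h.1)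

theorem isQuantileOf_quantile (hμ : ∀ x, 0 ≤ μ x) :
    IsQuantileOf (quantile μ) (cumMass μ) (∑ x ∈ μ.support, μ x) := by
  rintro y ⟨hy, hyk⟩ x
  refine ⟨fun h => (quantile_mem hy hyk).2.trans (cumMass_mono hμ h), fun h => ?_⟩
  obtain ⟨x', hx', hx'x, hyx'⟩ := exists_mem_support_le_cumMass hy h
  have hx'mem : x' ∈ {x | x ∈ μ.support ∧ y ≤ cumMass μ x} := ⟨hx', hyx'⟩
  exact (csInf_le (μ.support.finite_toSet.subset fun _ h => h.1).bddBelow hx'mem).trans hx'x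

theorem integrableOn_quantile (hμ : ∀ x, 0 ≤ μ x) :
    IntegrableOn (quantile μ) (Ioc 0 (∑ x ∈ μ.support, μ x)) := by
  refine Integrable.of_bound
    (aemeasurable_restrict_of_monotoneOn measurableSet_Ioc
      (isQuantileOf_quantile hμ).monotoneOn).aestronglyMeasurable
    (∑ x ∈ μ.support, |x|) ((ae_restrict_iff' measurableSet_Ioc).2 (ae_of_all _ ?_))
  rintro y ⟨hy, hyk⟩
  exact Finset.single_le_sum (f := fun x => |x|) (fun x _ => abs_nonneg x) (quantile_mem hy hyk).1

end Quantile

theorem integral_rounded_displacement_eq_L1_cumMass_general {k : ℕ}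
    (μ ν : ℝ →₀ ℝ) (hμ0 : ∀ x, 0 ≤ μ x) (hν0 : ∀ x, 0 ≤ ν x)
    (hμk : ∑ x ∈ μ.support, μ x = k) (hνk : ∑ x ∈ ν.support, ν x = k) :
    ∫ ω in Set.Ioc (0 : ℝ) 1,
        ∑ j : Fin k, |quantile μ (ω + (j : ℕ)) - quantile ν (ω + (j : ℕ))| =
      ∫ x : ℝ, |cumMass μ x - cumMass ν x| := by
  have hμq := isQuantileOf_quantile hμ0
  have hνq := isQuantileOf_quantile hν0
  have hμi := integrableOn_quantile hμ0
  have hνi := integrableOn_quantile hν0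
  rw [hμk] at hμq hμi
  rw [hνk] at hνq hνi
  rw [integral_Ioc_sum_comp_add_natCast (g := fun y => |quantile μ y - quantile ν y|)
    (hμi.sub hνi).abs]
  exact hμq.integral_abs_sub hνq (hμk ▸ cumMass_mem_Icc hμ0) (hνk ▸ cumMass_mem_Icc hν0)

/-- for fractional configurations `μ, ν` of mass `k` on the line,
the integral over `ω ∈ (0, 1]` of the total coordinatewise displacement of the
rounded configurations equals the `L¹` distance of the cumulative mass
functions. -/
theorem integral_rounded_displacement_eq_L1_cumMass {k : ℕ} (hk : 1 ≤ k)
    (μ ν : ℝ →₀ ℝ) (hμ0 : ∀ x, 0 ≤ μ x) (hν0 : ∀ x, 0 ≤ ν x)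
    (hμk : ∑ x ∈ μ.support, μ x = k) (hνk : ∑ x ∈ ν.support, ν x = k) :
    ∫ ω in Set.Ioc (0 : ℝ) 1,
        ∑ j : Fin k, |quantile μ (ω + (j : ℕ)) - quantile ν (ω + (j : ℕ))| =
      ∫ x : ℝ, |cumMass μ x - cumMass ν x| :=
  integral_rounded_displacement_eq_L1_cumMass_general μ ν hμ0 hν0 hμk hνk
end
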